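/- Let G be a finite group and let K ∈ CD(G) with Z(G) < K a proper containment of the center. Then Z(G) < core_G(K), where core_G(K) = ⋂_{x ∈ G} K^x is the normal core of K in G; that is, the normal core of K strictly contains the center of G. -/

import Mathlib

open Pointwise

/-- The Chermak-Delgado measure of a subgroup: `m_G(H) = |H| * |C_G(H)|`. -/
noncomputable def cdMeasure {G : Type*} [Group G] (H : Subgroup G) : Nat :=
  Nat.card H * Nat.card (Subgroup.centralizer (H : Set G))

/-- The Chermak-Delgado lattice of `G`: the subgroups of maximal Chermak-Delgado measure. -/
def CD (G : Type*) [Group G] : Set (Subgroup G) :=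
  {H | ∀ K : Subgroup G, cdMeasure K ≤ cdMeasure H}

/-- The conjugate subgroup `H^x = x⁻¹ H x`. -/
def conjSub {G : Type*} [Group G] (H : Subgroup G) (x : G) : Subgroup G :=
  Subgroup.map ((MulAut.conj x⁻¹).toMonoidHom) H

/-!
Take `B` minimal among the members of `CD G` strictly above `Z(G)` with `B ≤ K`. For every `x`,
`B ⊓ B^x` lies in `CD G` and contains `Z(G)`, so by minimality either `B ≤ B^x`, whence
`B = B^x`, or `B ⊓ B^x = Z(G)`. In the latter case the Chermak–Delgado identity
`C(B ⊓ B^x) = C(B) C(B^x)` gives `G = C(B) C(B^x)`, and writing `x = t s` accordingly shows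
`B^x = B` again. Hence `B` is normal and `Z(G) < B ≤ core_G(K)`.
-/

namespace Subgroup

variable {G : Type*} [Group G]

theorem ncard_image_mk_eq_relIndex (H K : Subgroup G) :
    (QuotientGroup.mk '' (H : Set G) : Set (G ⧸ K)).ncard = K.relIndex H := by
  have hsmul (h : H) : h • ((1 : G) : G ⧸ K) = (h : G) := congrArg _ (mul_one _)
  have horbit : MulAction.orbit H ((1 : G) : G ⧸ K) = QuotientGroup.mk '' (H : Set G) := by
    ext q
    simp only [MulAction.mem_orbit_iff, hsmul, Subtype.exists, exists_prop, Set.mem_image,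
      SetLike.mem_coe]
  have hstab : MulAction.stabilizer H ((1 : G) : G ⧸ K) = K.subgroupOf H := by
    ext h
    rw [MulAction.mem_stabilizer_iff, hsmul, QuotientGroup.eq, mul_one, inv_mem_iff,
      mem_subgroupOf]
  rw [← horbit, ← MulAction.index_stabilizer, hstab, relIndex]

theorem card_inf_mul_relIndex (H K : Subgroup G) :
    Nat.card ↥(K ⊓ H) * K.relIndex H = Nat.card H := by
  simpa [relIndex_bot_left] using relIndex_inf_mul_relIndex ⊥ K H

theorem card_mul_mul_card_inf (H K : Subgroup G) :
    Nat.card ((H : Set G) * K : Set G) * Nat.card ↥(H ⊓ K) = Nat.card H * Nat.card K := by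
  rw [card_mul_eq_card_subgroup_mul_card_quotient, Nat.card_coe_set_eq,
    ncard_image_mk_eq_relIndex, inf_comm, ← card_inf_mul_relIndex H K]
  ring

theorem centralizer_map_mulEquiv {G' : Type*} [Group G'] (e : G ≃* G') (H : Subgroup G) :
    centralizer (H.map e.toMonoidHom : Set G') = (centralizer (H : Set G)).map e.toMonoidHom := by
  ext g
  simp only [mem_map_equiv, mem_centralizer_iff, coe_map, Set.forall_mem_image, SetLike.mem_coe,
    MulEquiv.coe_toMonoidHom]
  refine forall₂_congr fun k _ => ?_
  rw [← e.symm.injective.eq_iff, map_mul, map_mul, e.symm_apply_apply]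

theorem inf_centralizer_le_centralizer_sup (H K : Subgroup G) :
    centralizer (H : Set G) ⊓ centralizer (K : Set G) ≤
      centralizer ((H ⊔ K : Subgroup G) : Set G) :=
  le_centralizer_iff.mpr
    (sup_le (le_centralizer_iff.mp inf_le_left) (le_centralizer_iff.mp inf_le_right))

theorem mul_centralizer_subset_centralizer_inf (H K : Subgroup G) :
    (centralizer (H : Set G) : Set G) * centralizer (K : Set G) ⊆
      centralizer ((H ⊓ K : Subgroup G) : Set G) :=
  mul_subset (centralizer_le inf_le_left) (centralizer_le inf_le_right)

end Subgroup

open Subgroup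

section Conjugation

variable {G : Type*} [Group G]

theorem mem_conjSub {H : Subgroup G} {x g : G} : g ∈ conjSub H x ↔ x * g * x⁻¹ ∈ H := by
  rw [conjSub, mem_map_equiv, MulAut.conj_symm_apply, inv_inv]

theorem conjSub_one (H : Subgroup G) : conjSub H 1 = H := by
  ext g
  rw [mem_conjSub, one_mul, inv_one, mul_one]

theorem conjSub_conjSub (H : Subgroup G) (a b : G) :
    conjSub (conjSub H a) b = conjSub H (a * b) := by
  ext g
  simp only [mem_conjSub, mul_inv_rev, mul_assoc]

theorem conjSub_mono {H K : Subgroup G} (h : H ≤ K) (x : G) : conjSub H x ≤ conjSub K x :=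
  map_mono h

theorem card_conjSub (H : Subgroup G) (x : G) : Nat.card (conjSub H x) = Nat.card H :=
  card_map_of_injective (MulAut.conj x⁻¹).injective

theorem conjSub_eq_self_of_mem_centralizer {H : Subgroup G} {t : G}
    (ht : t ∈ centralizer (H : Set G)) : conjSub H t = H :=
  mem_normalizer_iff_map_conj_eq.mp (centralizer_le_normalizer _ (inv_mem ht))

theorem center_le_conjSub {H : Subgroup G} (hH : center G ≤ H) (x : G) :
    center G ≤ conjSub H x := by
  have hx : x ∈ centralizer (center G : Set G) := fun _ hz => (mem_center_iff.mp hz x).symm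
  calc center G = conjSub (center G) x := (conjSub_eq_self_of_mem_centralizer hx).symm
    _ ≤ conjSub H x := conjSub_mono hH x

/-- Writing `x = t s`, the subgroup `H^x = H^s` is fixed by conjugation with `s⁻¹`. -/
theorem conjSub_eq_self_of_mem_mul {H : Subgroup G} {x : G}
    (hx : x ∈ (centralizer (H : Set G) : Set G) * centralizer (conjSub H x : Set G)) :
    conjSub H x = H := by
  obtain ⟨t, ht, s, hs, rfl⟩ := hx
  have hts : conjSub H (t * s) = conjSub H s := by
    rw [← conjSub_conjSub, conjSub_eq_self_of_mem_centralizer ht]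
  have hs' := conjSub_eq_self_of_mem_centralizer (inv_mem hs)
  rw [hts, conjSub_conjSub, mul_inv_cancel, conjSub_one] at hs'
  exact hts.trans hs'.symm

theorem cdMeasure_map_mulEquiv (e : G ≃* G) (H : Subgroup G) :
    cdMeasure (H.map e.toMonoidHom) = cdMeasure H := by
  rw [cdMeasure, cdMeasure, centralizer_map_mulEquiv, card_map_of_injective e.injective,
    card_map_of_injective e.injective]

theorem conjSub_mem_CD {H : Subgroup G} (hH : H ∈ CD G) (x : G) : conjSub H x ∈ CD G := by
  intro K
  rw [conjSub, cdMeasure_map_mulEquiv]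
  exact hH K

end Conjugation

section ChermakDelgado

variable {G : Type*} [Group G] [Finite G]

theorem cdMeasure_pos (H : Subgroup G) : 0 < cdMeasure H :=
  Nat.mul_pos Nat.card_pos Nat.card_pos

/-- Since `m(H) = m(L)`, `m(H)² = |HL| |H ⊓ L| |C(H)C(L)| |C(H) ⊓ C(L)|`, and
`|HL| |C(H) ⊓ C(L)| ≤ m(H ⊔ L) ≤ m(H)`. -/
theorem cdMeasure_le_card_inf_mul_card_mul {H L : Subgroup G} (hH : H ∈ CD G) (hL : L ∈ CD G) :
    cdMeasure H ≤ Nat.card ↥(H ⊓ L) *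
      Nat.card ((centralizer (H : Set G) : Set G) * centralizer (L : Set G) : Set G) := by
  set CH := centralizer (H : Set G)
  set CL := centralizer (L : Set G)
  have hHL : (H : Set G) * L ⊆ (H ⊔ L : Subgroup G) :=
    mul_subset (SetLike.coe_subset_coe.mpr le_sup_left) (SetLike.coe_subset_coe.mpr le_sup_right)
  have hsup : Nat.card ((H : Set G) * L : Set G) * Nat.card ↥(CH ⊓ CL) ≤ cdMeasure H :=
    calc _ ≤ cdMeasure (H ⊔ L) :=
          Nat.mul_le_mul (Nat.card_mono (Set.toFinite _) hHL)
            (Nat.card_mono (Set.toFinite _) (inf_centralizer_le_centralizer_sup H L))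
      _ ≤ cdMeasure H := hH _
  refine Nat.le_of_mul_le_mul_left ?_ (cdMeasure_pos H)
  calc cdMeasure H * cdMeasure H = cdMeasure H * cdMeasure L := by rw [le_antisymm (hH L) (hL H)]
    _ = Nat.card H * Nat.card L * (Nat.card CH * Nat.card CL) := by
      rw [cdMeasure, cdMeasure]
      ring
    _ = Nat.card ((H : Set G) * L : Set G) * Nat.card ↥(CH ⊓ CL) *
          (Nat.card ↥(H ⊓ L) * Nat.card ((CH : Set G) * CL : Set G)) := by
      rw [← card_mul_mul_card_inf, ← card_mul_mul_card_inf]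
      ring
    _ ≤ _ := Nat.mul_le_mul_right _ hsup

theorem inf_mem_CD {H L : Subgroup G} (hH : H ∈ CD G) (hL : L ∈ CD G) : H ⊓ L ∈ CD G :=
  fun K => (hH K).trans <| (cdMeasure_le_card_inf_mul_card_mul hH hL).trans <|
    Nat.mul_le_mul_left _ <| Nat.card_mono (Set.toFinite _) <|
      mul_centralizer_subset_centralizer_inf H L

theorem centralizer_inf_eq_mul_of_mem_CD {H L : Subgroup G} (hH : H ∈ CD G) (hL : L ∈ CD G) :
    (centralizer ((H ⊓ L : Subgroup G) : Set G) : Set G) =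
      (centralizer (H : Set G) : Set G) * centralizer (L : Set G) := by
  refine (Set.eq_of_subset_of_ncard_le (mul_centralizer_subset_centralizer_inf H L) ?_
    (Set.toFinite _)).symm
  rw [← Nat.card_coe_set_eq, ← Nat.card_coe_set_eq]
  refine Nat.le_of_mul_le_mul_left ?_ (Nat.card_pos (α := ↥(H ⊓ L)))
  exact (hH (H ⊓ L)).trans (cdMeasure_le_card_inf_mul_card_mul hH hL)

theorem conjSub_eq_self_of_inf_eq_center {H : Subgroup G} (hH : H ∈ CD G) {x : G}
    (hx : H ⊓ conjSub H x = center G) : conjSub H x = H := by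
  apply conjSub_eq_self_of_mem_mul
  rw [← centralizer_inf_eq_mul_of_mem_CD hH (conjSub_mem_CD hH x), hx,
    centralizer_eq_top_iff_subset.mpr subset_rfl]
  trivial

theorem conjSub_eq_self_of_minimal {B : Subgroup G}
    (hB : Minimal (fun H => H ∈ CD G ∧ center G < H) B) (x : G) : conjSub B x = B := by
  obtain ⟨hBCD, hZB⟩ := hB.prop
  rcases (le_inf hZB.le (center_le_conjSub hZB.le x)).lt_or_eq with hlt | heq
  · have hinf : B ⊓ conjSub B x ∈ CD G := inf_mem_CD hBCD (conjSub_mem_CD hBCD x)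
    have hle : B ≤ conjSub B x := (hB.le_of_le ⟨hinf, hlt⟩ inf_le_left).trans inf_le_right
    exact (eq_of_le_of_card_ge hle (card_conjSub B x).le).symm
  · exact conjSub_eq_self_of_inf_eq_center hBCD heq.symm

end ChermakDelgado

theorem stmt3 {G : Type*} [Group G] [Fintype G] (K : Subgroup G)
    (hK : K ∈ CD G) (hlt : Subgroup.center G < K) :
    Subgroup.center G < ⨅ x : G, conjSub K x := by
  obtain ⟨B, hBK, hB⟩ := exists_minimal_le_of_wellFoundedLT
    (fun H : Subgroup G => H ∈ CD G ∧ center G < H) K ⟨hK, hlt⟩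
  refine hB.prop.2.trans_le (le_iInf fun x => ?_)
  calc B = conjSub B x := (conjSub_eq_self_of_minimal hB x).symm
    _ ≤ conjSub K x := conjSub_mono hBK x
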